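/- arXiv:2510.24609 — 6 statements merged into one kernel-verified Lean document; each statement's English description precedes it below -/
import Mathlib

section
/- Let Y ⊆ X be a φ-minimal set consisting of more than one φ-orbit, and assume there exists a precompact section Ψ ⊆ X for φ such that for every R > 0 the set φ_{(-R,R)}Ψ is open in X, and Y ∩ closure(Ψ) = Y ∩ Ψ ≠ ∅. Then for every y₀ ∈ Y and every R > 0, the Lebesgue measure of the set {t ∈ ℝ : φ t y₀ ∈ φ_{(-R,R)}Ψ} is infinite. -/
open MeasureTheory

noncomputable section

variable {X : Type*} [TopologicalSpace X]

/-- The orbit `{φ t y : t ∈ ℝ}` of a point under a flow. -/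
def flowOrbit (φ : Flow ℝ X) (y : X) : Set X := Set.range fun t : ℝ => φ t y

/-- `φ_I F = {φ t x : t ∈ I, x ∈ F}`. -/
def flowSet (φ : Flow ℝ X) (I : Set ℝ) (F : Set X) : Set X :=
  {y | ∃ t ∈ I, ∃ x ∈ F, y = φ t x}

/-- `Ψ` is a (partial) section for the flow `φ`: for every `x`, the set of times at which
the orbit of `x` visits `Ψ` is a discrete (possibly empty) subset of `ℝ`. -/
def IsFlowSection (φ : Flow ℝ X) (Ψ : Set X) : Prop :=
  ∀ x : X, DiscreteTopology ↥{t : ℝ | φ t x ∈ Ψ}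

/-!
The times at which the orbit of `y₀` lies in `φ_{(-R,R)}Ψ` form the `R`-thickening of the set
of times at which it hits `Ψ`, so it suffices that the orbit of `y₀` hits `Ψ` at unboundedly
many times. If those hitting times were bounded, the orbit of `y₀` would meet the open set
`φ_{(-R,R)}Ψ` only along a compact arc, so every point of `Y ∩ Ψ`, being a limit of the dense
orbit of `y₀` inside that open set, would lie on this arc. By minimality the orbit of every
`y ∈ Y` passes through `Y ∩ Ψ`, so `Y` would be the single orbit of `y₀`.
-/

open Metric Set Bornology

theorem measure_thickening_eq_top_of_not_isBounded {α : Type*} [PseudoMetricSpace α]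
    [MeasurableSpace α] [OpensMeasurableSpace α] {μ : Measure α} {S : Set α} {r : ℝ}
    {δ : ENNReal} (hδ : 0 < δ) (hball : ∀ x, δ ≤ μ (ball x r)) (hS : ¬ IsBounded S) :
    μ (thickening r S) = ⊤ := by
  -- If `μ (thickening r S)` is finite, its part outside a large ball has measure `< δ`,
  -- yet it contains the `r`-ball around a point of `S` far enough out.
  by_contra hfin
  obtain ⟨x₀, -⟩ := nonempty_of_not_isBounded hS
  set s : ℕ → Set α := fun n => thickening r S \ closedBall x₀ n
  have hs_anti : Antitone s := fun m n hmn =>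
    sdiff_subset_sdiff_right (closedBall_subset_closedBall (by exact_mod_cast hmn))
  have hs_empty : ⋂ n, s n = ∅ := by
    refine eq_empty_of_forall_notMem fun x hx => ?_
    obtain ⟨n, hn⟩ := exists_nat_ge (dist x x₀)
    exact (mem_iInter.1 hx n).2 hn
  have hs_tendsto : Filter.Tendsto (fun n => μ (s n)) Filter.atTop (nhds 0) := by
    rw [← measure_empty (μ := μ), ← hs_empty]
    exact tendsto_measure_iInter_atTop
      (fun n => (isOpen_thickening.sdiff isClosed_closedBall).nullMeasurableSet) hs_anti
      ⟨0, ne_top_of_le_ne_top hfin (measure_mono sdiff_subset)⟩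
  obtain ⟨n, hn⟩ := ((tendsto_order.1 hs_tendsto).2 δ hδ).exists
  obtain ⟨c, hcS, hc⟩ : ∃ c ∈ S, c ∉ closedBall x₀ (n + r) :=
    not_subset.1 fun h => hS (isBounded_closedBall.subset h)
  have hball_sub : ball c r ⊆ s n := fun z hz => by
    refine ⟨ball_subset_thickening hcS r hz, fun hz' => hc ?_⟩
    rw [mem_closedBall] at hz' ⊢
    linarith [dist_triangle c z x₀, dist_comm z c, mem_ball.1 hz]
  exact hn.not_ge ((hball c).trans (measure_mono hball_sub))

namespace Flow

variable {τ α : Type*} [TopologicalSpace τ] [TopologicalSpace α] [AddGroup τ] (φ : Flow τ α)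

theorem apply_eq_iff_eq_neg_apply {t : τ} {x y : α} : φ t x = y ↔ x = φ (-t) y :=
  (φ.toHomeomorph t).toEquiv.eq_symm_apply.symm

end Flow

section

variable (φ : Flow ℝ X)

theorem mem_flowSet_iff {I : Set ℝ} {F : Set X} {y : X} :
    y ∈ flowSet φ I F ↔ ∃ t ∈ I, φ (-t) y ∈ F := by
  simp [flowSet, eq_comm (a := y), φ.apply_eq_iff_eq_neg_apply]

theorem subset_flowSet {I : Set ℝ} (hI : 0 ∈ I) (F : Set X) : F ⊆ flowSet φ I F :=
  fun x hx => ⟨0, hI, x, hx, (φ.map_zero_apply x).symm⟩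

theorem flowOrbit_eq_of_mem {x y : X} (h : x ∈ flowOrbit φ y) :
    flowOrbit φ x = flowOrbit φ y := by
  obtain ⟨a, rfl⟩ := h
  ext z
  constructor
  · rintro ⟨t, rfl⟩
    exact ⟨t + a, φ.map_add t a y⟩
  · rintro ⟨t, rfl⟩
    exact ⟨t - a, show φ (t - a) (φ a y) = φ t y by rw [← φ.map_add, sub_add_cancel]⟩

theorem setOf_apply_mem_flowSet_Ioo_eq_thickening (F : Set X) (y : X) (R : ℝ) :
    {t : ℝ | φ t y ∈ flowSet φ (Ioo (-R) R) F} = thickening R {t | φ t y ∈ F} := by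
  ext t
  simp only [mem_ofPred_eq, mem_flowSet_iff, mem_thickening_iff, ← φ.map_add, mem_Ioo,
    Real.dist_eq]
  constructor
  · rintro ⟨s, hs, hF⟩
    exact ⟨-s + t, hF, by rw [abs_lt]; constructor <;> linarith [hs.1, hs.2]⟩
  · rintro ⟨c, hF, hc⟩
    rw [abs_lt] at hc
    exact ⟨t - c, ⟨by linarith [hc.2], by linarith [hc.1]⟩, by rwa [neg_sub, sub_add_cancel]⟩

theorem exists_apply_mem_inter_of_closure_flowOrbit_eq {I : Set ℝ} {Y Ψ : Set X} {q : X}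
    (hq : closure (flowOrbit φ q) = Y) (hI : 0 ∈ I) (hopen : IsOpen (flowSet φ I Ψ))
    (hne : (Y ∩ Ψ).Nonempty) : ∃ t, φ t q ∈ Y ∩ Ψ := by
  obtain ⟨p, hpY, hpΨ⟩ := hne
  rw [← hq] at hpY
  obtain ⟨_, hzB, t, rfl⟩ := mem_closure_iff.1 hpY _ hopen (subset_flowSet φ hI Ψ hpΨ)
  obtain ⟨s, -, hs⟩ := (mem_flowSet_iff φ).1 hzB
  rw [← φ.map_add] at hs
  exact ⟨-s + t, hq ▸ subset_closure ⟨-s + t, rfl⟩, hs⟩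

theorem inter_closure_flowOrbit_subset_of_isBounded [T2Space X] {B : Set X} {y : X}
    (hB : IsOpen B) (hbdd : IsBounded {t : ℝ | φ t y ∈ B}) :
    B ∩ closure (flowOrbit φ y) ⊆ flowOrbit φ y := by
  set arc := (fun t => φ t y) '' closure {t : ℝ | φ t y ∈ B}
  have harc : IsClosed arc :=
    (hbdd.isCompact_closure.image (φ.continuous continuous_id continuous_const)).isClosed
  have hsub : B ∩ flowOrbit φ y ⊆ arc := by
    rintro _ ⟨hB', t, rfl⟩
    exact ⟨t, subset_closure hB', rfl⟩
  calc B ∩ closure (flowOrbit φ y) ⊆ closure (B ∩ flowOrbit φ y) := hB.inter_closure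
    _ ⊆ arc := closure_minimal hsub harc
    _ ⊆ flowOrbit φ y := image_subset_range _ _

theorem subset_flowOrbit_of_isBounded [T2Space X] {Y Ψ : Set X} {R : ℝ} {y₀ : X}
    (hmin : ∀ y ∈ Y, closure (flowOrbit φ y) = Y) (hR : 0 < R)
    (hopen : IsOpen (flowSet φ (Ioo (-R) R) Ψ)) (hne : (Y ∩ Ψ).Nonempty) (hy₀ : y₀ ∈ Y)
    (hbdd : IsBounded {t | φ t y₀ ∈ Ψ}) : Y ⊆ flowOrbit φ y₀ := by
  have hR0 : (0 : ℝ) ∈ Ioo (-R) R := ⟨neg_lt_zero.2 hR, hR⟩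
  have hhits : Y ∩ Ψ ⊆ flowOrbit φ y₀ := fun p ⟨hpY, hpΨ⟩ =>
    inter_closure_flowOrbit_subset_of_isBounded φ hopen
      (by rw [setOf_apply_mem_flowSet_Ioo_eq_thickening]; exact hbdd.thickening)
      ⟨subset_flowSet φ hR0 Ψ hpΨ, (hmin y₀ hy₀).symm ▸ hpY⟩
  intro q hq
  obtain ⟨t, hqt⟩ := exists_apply_mem_inter_of_closure_flowOrbit_eq φ (hmin q hq) hR0 hopen hne
  rw [← flowOrbit_eq_of_mem φ (hhits hqt), flowOrbit_eq_of_mem φ ⟨t, rfl⟩]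
  exact ⟨0, φ.map_zero_apply q⟩

end

theorem volume_time_in_flowSet_eq_top_general
    [T2Space X] (φ : Flow ℝ X) (Y : Set X)
    (hmin : ∀ y ∈ Y, closure (flowOrbit φ y) = Y)
    (hmulti : ∃ y ∈ Y, ∃ y' ∈ Y, y' ∉ flowOrbit φ y)
    (Ψ : Set X) (hopen : ∀ R : ℝ, 0 < R → IsOpen (flowSet φ (Set.Ioo (-R) R) Ψ))
    (hne : (Y ∩ Ψ).Nonempty) (y₀ : X) (hy₀ : y₀ ∈ Y) (R : ℝ) (hR : 0 < R) :
    volume {t : ℝ | φ t y₀ ∈ flowSet φ (Set.Ioo (-R) R) Ψ} = ⊤ := by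
  have hunbdd : ¬ IsBounded {t | φ t y₀ ∈ Ψ} := by
    intro hbdd
    obtain ⟨y, hy, y', hy', hy'y⟩ := hmulti
    have hY := subset_flowOrbit_of_isBounded φ hmin hR (hopen R hR) hne hy₀ hbdd
    exact hy'y (flowOrbit_eq_of_mem φ (hY hy) ▸ hY hy')
  rw [setOf_apply_mem_flowSet_Ioo_eq_thickening]
  exact measure_thickening_eq_top_of_not_isBounded (ENNReal.ofReal_pos.2 (by linarith))
    (fun c => (Real.volume_ball c R).ge) hunbdd

/-- Under the hypotheses of the measure-construction proposition, the orbit of any point of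
`Y` spends an infinite amount of time in `B_R = φ_{(-R,R)}Ψ`. -/
theorem volume_time_in_flowSet_eq_top
    [LocallyCompactSpace X] [SecondCountableTopology X] [T2Space X]
    (φ : Flow ℝ X) (Y : Set X) (hYne : Y.Nonempty) (hYcl : IsClosed Y)
    (hmin : ∀ y ∈ Y, closure (flowOrbit φ y) = Y)
    (hmulti : ∃ y ∈ Y, ∃ y' ∈ Y, y' ∉ flowOrbit φ y)
    (Ψ : Set X) (hΨpre : IsCompact (closure Ψ)) (hΨsec : IsFlowSection φ Ψ)
    (hopen : ∀ R : ℝ, 0 < R → IsOpen (flowSet φ (Set.Ioo (-R) R) Ψ))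
    (hcap : Y ∩ closure Ψ = Y ∩ Ψ) (hne : (Y ∩ Ψ).Nonempty)
    (y₀ : X) (hy₀ : y₀ ∈ Y) (R : ℝ) (hR : 0 < R) :
    volume {t : ℝ | φ t y₀ ∈ flowSet φ (Set.Ioo (-R) R) Ψ} = ⊤ :=
  volume_time_in_flowSet_eq_top_general φ Y hmin hmulti Ψ hopen hne y₀ hy₀ R hR
end
end

section
/- Let Y ⊆ X be a φ-minimal set consisting of more than one φ-orbit, with Y not compact, and assume there exists a precompact section Ψ ⊆ X for φ such that for every R > 0 the set B_R := φ_{(-R,R)}Ψ is open in X, and Y ∩ closure(Ψ) = Y ∩ Ψ ≠ ∅. Fix y₀ ∈ Y and R > 0. Then for every ε ∈ (0,1) there exist a compact set K ⊆ B_R and T₀ > 0 such that for all T ≥ T₀: vol {t ∈ [-T,T] : φ t y₀ ∈ K} ≥ (1 - ε) · vol {t ∈ [-T,T] : φ t y₀ ∈ B_R}, where vol denotes Lebesgue measure on ℝ. (Asymptotic tightness of the statistical measures along the orbit of y₀.) -/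
/-! Let `S` be the set of times at which the orbit of `y₀` visits `Ψ`. Since the orbit stays in
the closed invariant set `Y` and `Y ∩ closure Ψ = Y ∩ Ψ`, `S` is closed, and being discrete it is
locally finite. The orbit is in `B_R` exactly at the times in the `R`-thickening of `S`, and at the
times in the `ρ`-thickening of `S` (with `ρ < R`) it lies in the compact set `φ_{[-ρ, ρ]}(Y ∩ Ψ)`.
So everything reduces to comparing the measures of the `R`- and `ρ`-thickenings of a locally
finite set of reals inside `[-T, T]`: for a finite set, shrinking the radius by a factor `c ≤ 1`
shrinks the measure by at most that factor, and the truncation to `[-T, T]` costs an error of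
order `R`, which is negligible when `S` is unbounded because then the measure in the window grows
without bound. -/

open MeasureTheory

noncomputable section

variable {X : Type*} [TopologicalSpace X]

open Metric Set Filter

lemma Flow.eq_apply_sub_iff (φ : Flow ℝ X) {t s : ℝ} {x y : X} :
    φ t y = φ s x ↔ x = φ (t - s) y := by
  constructor
  · intro h
    rw [sub_eq_neg_add, φ.map_add, h, ← φ.map_add, neg_add_cancel, φ.map_zero_apply]
  · rintro rfl
    rw [← φ.map_add, add_sub_cancel]

lemma mem_flowSet_Ioo_iff_mem_thickening (φ : Flow ℝ X) (F : Set X) (y : X) (r t : ℝ) :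
    φ t y ∈ flowSet φ (Ioo (-r) r) F ↔ t ∈ thickening r {s | φ s y ∈ F} := by
  simp only [flowSet, mem_ofPred_eq, φ.eq_apply_sub_iff, mem_thickening_iff, Real.dist_eq, mem_Ioo]
  constructor
  · rintro ⟨s, ⟨hs₁, hs₂⟩, x, hx, rfl⟩
    exact ⟨t - s, hx, by rw [sub_sub_cancel, abs_lt]; constructor <;> linarith⟩
  · rintro ⟨u, hu, htu⟩
    rw [abs_lt] at htu
    exact ⟨t - u, ⟨by linarith, by linarith⟩, _, hu, by rw [sub_sub_cancel]⟩

lemma flowSet_mono (φ : Flow ℝ X) {I J : Set ℝ} {F G : Set X} (hIJ : I ⊆ J) (hFG : F ⊆ G) :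
    flowSet φ I F ⊆ flowSet φ J G := by
  rintro _ ⟨t, ht, x, hx, rfl⟩
  exact ⟨t, hIJ ht, x, hFG hx, rfl⟩

lemma IsCompact.flowSet (φ : Flow ℝ X) {I : Set ℝ} {F : Set X} (hI : IsCompact I)
    (hF : IsCompact F) : IsCompact (flowSet φ I F) := by
  convert (hI.prod hF).image (φ.continuous continuous_fst continuous_snd)
  ext y
  simp [_root_.flowSet, eq_comm]

lemma isClosed_setOf_flow_mem {φ : Flow ℝ X} {Y Ψ : Set X} (hY : IsClosed Y)
    (hcap : Y ∩ closure Ψ = Y ∩ Ψ) {y : X} (hy : ∀ t, φ t y ∈ Y) : IsClosed {t | φ t y ∈ Ψ} := by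
  have hpre : {t | φ t y ∈ Ψ} = (fun t => φ t y) ⁻¹' (Y ∩ closure Ψ) := by
    ext t; simp [hcap, hy t]
  rw [hpre]
  exact (hY.inter isClosed_closure).preimage (φ.continuous continuous_id continuous_const)

lemma IsFlowSection.finite_inter_Icc {φ : Flow ℝ X} {Ψ : Set X} (hΨ : IsFlowSection φ Ψ) {y : X}
    (hclosed : IsClosed {t | φ t y ∈ Ψ}) (a b : ℝ) : ({t | φ t y ∈ Ψ} ∩ Icc a b).Finite :=
  (isCompact_Icc.inter_left hclosed).finite <| isDiscrete_iff_discreteTopology.2 <|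
    (hΨ y).of_subset inter_subset_left

lemma ball_sdiff_thickening_of_isGreatest {s : Set ℝ} {a m r : ℝ} (ha : IsGreatest s a)
    (ham : a ≤ m) : ball m r \ thickening r s = Ioo (m - r) (m + r) ∩ Ici (a + r) := by
  ext t
  simp only [Set.mem_sdiff, mem_inter_iff, mem_thickening_iff, Real.ball_eq_Ioo, mem_Ioo, mem_Ici,
    Real.dist_eq, abs_lt, not_exists, not_and]
  constructor
  · rintro ⟨ht, hts⟩
    exact ⟨ht, not_lt.1 fun h => hts a ha.1 (by linarith) (by linarith)⟩
  · rintro ⟨ht, hat⟩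
    refine ⟨ht, fun u hu _ => ?_⟩
    linarith [ha.2 hu]

lemma volume_ball_sdiff_thickening_of_isGreatest {s : Set ℝ} {a m r : ℝ} (ha : IsGreatest s a)
    (ham : a ≤ m) : volume (ball m r \ thickening r s) = ENNReal.ofReal (min (2 * r) (m - a)) := by
  rw [ball_sdiff_thickening_of_isGreatest ha ham,
    measure_congr ((ae_eq_refl _).inter Ioi_ae_eq_Ici.symm), Ioo_inter_Ioi, Real.volume_Ioo]
  congr 1
  rcases le_total (m - r) (a + r) with h | h
  · rw [max_eq_right h, min_eq_right (by linarith)]; ring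
  · rw [max_eq_left h, min_eq_left (by linarith)]; ring

lemma measure_union_eq_add_sdiff {α : Type*} [MeasurableSpace α] (μ : Measure α) {s t : Set α}
    (hs : MeasurableSet s) (ht : MeasurableSet t) : μ (s ∪ t) = μ s + μ (t \ s) := by
  rw [← union_sdiff_self, measure_union disjoint_sdiff_right (ht.diff hs)]

/-- Adding a new rightmost centre `m` to `s` adds `min (2 r) (m - max s)` to the measure, and
`c * min (2 r) g ≤ min (2 c r) g`. -/
theorem ofReal_mul_volume_thickening_le {c : ℝ} (hc₀ : 0 ≤ c) (hc₁ : c ≤ 1) (r : ℝ)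
    {s : Set ℝ} (hs : s.Finite) :
    ENNReal.ofReal c * volume (thickening r s) ≤ volume (thickening (c * r) s) := by
  classical
  lift s to Finset ℝ using hs
  induction s using Finset.induction_on_max with
  | empty => simp
  | insert m s hm ih =>
    have hball (ρ : ℝ) : thickening ρ ((insert m s : Finset ℝ) : Set ℝ) =
        thickening ρ (s : Set ℝ) ∪ ball m ρ := by
      rw [Finset.coe_insert, insert_eq, thickening_union, thickening_singleton, union_comm]
    simp only [hball, measure_union_eq_add_sdiff _ isOpen_thickening.measurableSet
      measurableSet_ball, mul_add]
    refine add_le_add ih ?_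
    rcases s.eq_empty_or_nonempty with rfl | hs
    · simp only [Finset.coe_empty, thickening_empty, sdiff_empty, Real.volume_ball,
        ← ENNReal.ofReal_mul hc₀]
      exact le_of_eq (by ring_nf)
    · have ha := s.isGreatest_max' hs
      have ham := (hm _ ha.1).le
      rw [volume_ball_sdiff_thickening_of_isGreatest ha ham,
        volume_ball_sdiff_thickening_of_isGreatest ha ham, ← ENNReal.ofReal_mul hc₀]
      refine ENNReal.ofReal_le_ofReal (le_min ?_ ?_)
      · nlinarith [min_le_left (2 * r) (m - s.max' hs)]
      · rcases le_total 0 (min (2 * r) (m - s.max' hs)) with h | h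
        · nlinarith [min_le_right (2 * r) (m - s.max' hs)]
        · nlinarith

lemma thickening_inter_Icc_subset (S : Set ℝ) (r a b : ℝ) :
    thickening r S ∩ Icc a b ⊆ thickening r (S ∩ Icc (a - r) (b + r)) := by
  rintro t ⟨ht, hat, htb⟩
  obtain ⟨u, hu, htu⟩ := mem_thickening_iff.1 ht
  rw [Real.dist_eq, abs_lt] at htu
  exact mem_thickening_iff.2 ⟨u, ⟨hu, by linarith, by linarith⟩, by rwa [Real.dist_eq, abs_lt]⟩

lemma thickening_subset_Icc {F : Set ℝ} {a b : ℝ} (hF : F ⊆ Icc a b) (r : ℝ) :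
    thickening r F ⊆ Icc (a - r) (b + r) := by
  intro t ht
  obtain ⟨u, hu, htu⟩ := mem_thickening_iff.1 ht
  rw [Real.dist_eq, abs_lt] at htu
  exact ⟨by linarith [(hF hu).1], by linarith [(hF hu).2]⟩

lemma volume_le_volume_inter_Icc_add {A : Set ℝ} {a b d : ℝ} (hd : 0 ≤ d)
    (hA : A ⊆ Icc (a - d) (b + d)) :
    volume A ≤ volume (A ∩ Icc a b) + ENNReal.ofReal (2 * d) := by
  have hout : A \ Icc a b ⊆ Ico (a - d) a ∪ Ioc b (b + d) := by
    rintro t ⟨htA, htab⟩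
    rw [mem_Icc, not_and_or, not_le, not_le] at htab
    rcases htab with h | h
    · exact Or.inl ⟨(hA htA).1, h⟩
    · exact Or.inr ⟨h, (hA htA).2⟩
  calc volume A ≤ volume (A ∩ Icc a b) + volume (A \ Icc a b) := measure_le_inter_add_sdiff _ _ _
    _ ≤ volume (A ∩ Icc a b) + (volume (Ico (a - d) a) + volume (Ioc b (b + d))) :=
        by gcongr; exact (measure_mono hout).trans (measure_union_le _ _)
    _ = volume (A ∩ Icc a b) + ENNReal.ofReal (2 * d) := by
        rw [Real.volume_Ico, Real.volume_Ioc, ← ENNReal.ofReal_add (by linarith) (by linarith)]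
        ring_nf

lemma monotone_volume_inter_Icc (A : Set ℝ) : Monotone fun T => volume (A ∩ Icc (-T) T) :=
  fun _ _ h => measure_mono (inter_subset_inter_right _ (Icc_subset_Icc (neg_le_neg h) h))

/-- Far from a bounded window, an unbounded `S` supplies a fresh interval of length `2 R`. -/
lemma exists_le_volume_thickening_inter_Icc {S : Set ℝ} (hS : ¬ Bornology.IsBounded S)
    {R : ℝ} (hR : 0 < R) (n : ℕ) :
    ∃ T, ENNReal.ofReal (2 * R * n) ≤ volume (thickening R S ∩ Icc (-T) T) := by
  induction n with
  | zero => exact ⟨0, by simp⟩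
  | succ n ih =>
    obtain ⟨T, hT⟩ := ih
    obtain ⟨u, hu, hTu⟩ := (by simpa [isBounded_iff_forall_norm_le] using hS :
      ∀ c, ∃ u ∈ S, c < |u|) (T + R)
    have hball : ball u R ⊆ thickening R S ∩ Icc (-(|u| + R)) (|u| + R) := by
      refine fun t ht => ⟨mem_thickening_iff.2 ⟨u, hu, ht⟩, ?_⟩
      rw [mem_ball, Real.dist_eq, abs_lt] at ht
      constructor <;> linarith [neg_abs_le u, le_abs_self u]
    have hwindow : thickening R S ∩ Icc (-T) T ⊆ thickening R S ∩ Icc (-(|u| + R)) (|u| + R) :=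
      inter_subset_inter_right _ (Icc_subset_Icc (by linarith [abs_nonneg u]) (by linarith))
    have hdisj : Disjoint (thickening R S ∩ Icc (-T) T) (ball u R) := by
      refine disjoint_left.2 fun t ⟨_, htT⟩ ht => ?_
      rw [mem_ball, Real.dist_eq, abs_lt] at ht
      rcases lt_abs.1 hTu with h | h <;> linarith [htT.1, htT.2]
    refine ⟨|u| + R, ?_⟩
    calc ENNReal.ofReal (2 * R * ↑(n + 1))
        = ENNReal.ofReal (2 * R * n) + volume (ball u R) := by
          rw [Real.volume_ball, ← ENNReal.ofReal_add (by positivity) (by positivity)]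
          push_cast; ring_nf
      _ ≤ volume (thickening R S ∩ Icc (-T) T) + volume (ball u R) := by gcongr
      _ = volume (thickening R S ∩ Icc (-T) T ∪ ball u R) :=
          (measure_union hdisj measurableSet_ball).symm
      _ ≤ _ := measure_mono (union_subset hwindow hball)

lemma eventually_ofReal_mul_volume_thickening_inter_Icc_le_of_finite {S : Set ℝ} (hS : S.Finite)
    {R c : ℝ} (hR : 0 ≤ R) (hc₀ : 0 ≤ c) (hc₁ : c ≤ 1) :
    ∀ᶠ T in atTop, ENNReal.ofReal c * volume (thickening R S ∩ Icc (-T) T) ≤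
      volume (thickening (c * R) S ∩ Icc (-T) T) := by
  obtain ⟨C, hC⟩ := isBounded_iff_forall_norm_le.1 hS.isBounded
  have hSC : S ⊆ Icc (-C) C := fun u hu => abs_le.1 (hC u hu)
  filter_upwards [eventually_ge_atTop (C + R)] with T hT
  have hsub : thickening (c * R) S ⊆ Icc (-T) T :=
    ((thickening_mono (mul_le_of_le_one_left hR hc₁) S).trans (thickening_subset_Icc hSC R)).trans
      (Icc_subset_Icc (by linarith) (by linarith))
  calc ENNReal.ofReal c * volume (thickening R S ∩ Icc (-T) T)
      ≤ ENNReal.ofReal c * volume (thickening R S) := by gcongr; exact inter_subset_left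
    _ ≤ volume (thickening (c * R) S) := ofReal_mul_volume_thickening_le hc₀ hc₁ R hS
    _ = volume (thickening (c * R) S ∩ Icc (-T) T) := by rw [inter_eq_left.2 hsub]

/-- Truncating to `[-T, T]` costs at most `4 R`, which the growth of the measure in the window
absorbs into the slack between `μ` and `c`. -/
lemma eventually_ofReal_mul_volume_thickening_inter_Icc_le_of_not_isBounded {S : Set ℝ}
    (hS : ∀ a b, (S ∩ Icc a b).Finite) (hSb : ¬ Bornology.IsBounded S) {R c μ : ℝ} (hR : 0 < R)
    (hμ : 0 ≤ μ) (hμc : μ < c) (hc : c ≤ 1) :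
    ∀ᶠ T in atTop, ENNReal.ofReal μ * volume (thickening R S ∩ Icc (-T) T) ≤
      volume (thickening (c * R) S ∩ Icc (-T) T) := by
  obtain ⟨n, hn⟩ := exists_nat_ge (2 / (c - μ))
  obtain ⟨T₁, hT₁⟩ := exists_le_volume_thickening_inter_Icc hSb hR n
  filter_upwards [eventually_ge_atTop T₁] with T hT
  set f := volume (thickening R S ∩ Icc (-T) T)
  have hf : ENNReal.ofReal (2 * (2 * R)) ≤ ENNReal.ofReal (c - μ) * f := by
    refine le_trans ?_ (mul_le_mul_right (hT₁.trans (monotone_volume_inter_Icc _ hT)) _)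
    rw [← ENNReal.ofReal_mul (sub_nonneg.2 hμc.le)]
    rw [div_le_iff₀ (sub_pos.2 hμc)] at hn
    exact ENNReal.ofReal_le_ofReal (by nlinarith)
  have hf_ne_top : ENNReal.ofReal (c - μ) * f ≠ ⊤ := ENNReal.mul_ne_top ENNReal.ofReal_ne_top
    (measure_mono inter_subset_right |>.trans_lt measure_Icc_lt_top).ne
  set F := S ∩ Icc (-T - R) (T + R)
  have hFsub : thickening (c * R) F ⊆ Icc (-T - 2 * R) (T + 2 * R) :=
    (thickening_subset_Icc inter_subset_right _).trans
      (Icc_subset_Icc (by nlinarith) (by nlinarith))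
  refine (ENNReal.add_le_add_iff_right hf_ne_top).1 ?_
  calc ENNReal.ofReal μ * f + ENNReal.ofReal (c - μ) * f = ENNReal.ofReal c * f := by
        rw [← add_mul, ← ENNReal.ofReal_add hμ (sub_nonneg.2 hμc.le), add_sub_cancel]
    _ ≤ ENNReal.ofReal c * volume (thickening R F) := by
        gcongr; exact measure_mono (thickening_inter_Icc_subset S R (-T) T)
    _ ≤ volume (thickening (c * R) F) :=
        ofReal_mul_volume_thickening_le (hμ.trans hμc.le) hc R (hS _ _)
    _ ≤ volume (thickening (c * R) F ∩ Icc (-T) T) + ENNReal.ofReal (2 * (2 * R)) :=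
        volume_le_volume_inter_Icc_add (by positivity) hFsub
    _ ≤ volume (thickening (c * R) S ∩ Icc (-T) T) + ENNReal.ofReal (c - μ) * f := by
        gcongr; exact thickening_subset_of_subset _ inter_subset_left

theorem eventually_ofReal_mul_volume_thickening_inter_Icc_le {S : Set ℝ}
    (hS : ∀ a b, (S ∩ Icc a b).Finite) {R c μ : ℝ} (hR : 0 < R) (hμ : 0 ≤ μ) (hμc : μ < c)
    (hc : c ≤ 1) :
    ∀ᶠ T in atTop, ENNReal.ofReal μ * volume (thickening R S ∩ Icc (-T) T) ≤
      volume (thickening (c * R) S ∩ Icc (-T) T) := by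
  by_cases hSb : Bornology.IsBounded S
  · obtain ⟨C, hC⟩ := isBounded_iff_forall_norm_le.1 hSb
    have hSfin : S.Finite := (hS (-C) C).subset fun u hu => ⟨hu, abs_le.1 (hC u hu)⟩
    filter_upwards [eventually_ofReal_mul_volume_thickening_inter_Icc_le_of_finite hSfin hR.le
      (hμ.trans hμc.le) hc] with T hT
    exact le_trans (by gcongr) hT
  · exact eventually_ofReal_mul_volume_thickening_inter_Icc_le_of_not_isBounded hS hSb hR hμ hμc hc

theorem asymptotic_tightness_of_statistical_measures_general
    (φ : Flow ℝ X) (Y : Set X) (hYcl : IsClosed Y)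
    (hmin : ∀ y ∈ Y, closure (flowOrbit φ y) = Y)
    (Ψ : Set X) (hΨpre : IsCompact (closure Ψ)) (hΨsec : IsFlowSection φ Ψ)
    (hcap : Y ∩ closure Ψ = Y ∩ Ψ)
    (y₀ : X) (hy₀ : y₀ ∈ Y) (R : ℝ) (hR : 0 < R)
    (ε : ℝ) (hε₀ : 0 < ε) (hε₁ : ε < 1) :
    ∃ K : Set X, IsCompact K ∧ K ⊆ flowSet φ (Set.Ioo (-R) R) Ψ ∧
      ∃ T₀ : ℝ, 0 < T₀ ∧ ∀ T : ℝ, T₀ ≤ T →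
        ENNReal.ofReal (1 - ε) *
            volume {t ∈ Set.Icc (-T) T | φ t y₀ ∈ flowSet φ (Set.Ioo (-R) R) Ψ} ≤
          volume {t ∈ Set.Icc (-T) T | φ t y₀ ∈ K} := by
  set S := {t : ℝ | φ t y₀ ∈ Ψ}
  have horbit (t : ℝ) : φ t y₀ ∈ Y := hmin y₀ hy₀ ▸ subset_closure ⟨t, rfl⟩
  have hSY : S = {t | φ t y₀ ∈ Y ∩ Ψ} := by ext t; simp [S, horbit t]
  set c := 1 - ε / 2 with hc
  have hSfin := hΨsec.finite_inter_Icc (isClosed_setOf_flow_mem hYcl hcap horbit)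
  obtain ⟨T₀, hT₀⟩ := eventually_atTop.1 <| eventually_ofReal_mul_volume_thickening_inter_Icc_le
    hSfin hR (sub_nonneg.2 hε₁.le) (by linarith : 1 - ε < c) (by linarith : c ≤ 1)
  have hcR : c * R < R := mul_lt_of_lt_one_left hR (by linarith)
  refine ⟨flowSet φ (Icc (-(c * R)) (c * R)) (Y ∩ Ψ),
    isCompact_Icc.flowSet φ (hcap ▸ hΨpre.inter_left hYcl),
    flowSet_mono φ (Icc_subset_Ioo (by linarith) hcR) inter_subset_right,
    max T₀ 1, by positivity, fun T hT => ?_⟩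
  calc ENNReal.ofReal (1 - ε) *
        volume {t ∈ Icc (-T) T | φ t y₀ ∈ flowSet φ (Ioo (-R) R) Ψ}
      = ENNReal.ofReal (1 - ε) * volume (thickening R S ∩ Icc (-T) T) := by
        simp only [mem_flowSet_Ioo_iff_mem_thickening, sep_mem_eq, inter_comm (Icc _ _)]
        rfl
    _ ≤ volume (thickening (c * R) S ∩ Icc (-T) T) := hT₀ T (le_of_max_le_left hT)
    _ ≤ volume {t ∈ Icc (-T) T | φ t y₀ ∈ flowSet φ (Icc (-(c * R)) (c * R)) (Y ∩ Ψ)} := by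
        refine measure_mono fun t ⟨ht, htT⟩ =>
          ⟨htT, flowSet_mono φ Ioo_subset_Icc_self subset_rfl ?_⟩
        rwa [mem_flowSet_Ioo_iff_mem_thickening, ← hSY]

/-- Asymptotic tightness of the statistical measures along the orbit of `y₀`: a proportion
at least `1 - ε` of the time spent in `B_R = φ_{(-R,R)}Ψ` is spent in a compact subset. -/
theorem asymptotic_tightness_of_statistical_measures
    [LocallyCompactSpace X] [SecondCountableTopology X] [T2Space X]
    (φ : Flow ℝ X) (Y : Set X) (hYne : Y.Nonempty) (hYcl : IsClosed Y)
    (hYnc : ¬ IsCompact Y)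
    (hmin : ∀ y ∈ Y, closure (flowOrbit φ y) = Y)
    (hmulti : ∃ y ∈ Y, ∃ y' ∈ Y, y' ∉ flowOrbit φ y)
    (Ψ : Set X) (hΨpre : IsCompact (closure Ψ)) (hΨsec : IsFlowSection φ Ψ)
    (hopen : ∀ R : ℝ, 0 < R → IsOpen (flowSet φ (Set.Ioo (-R) R) Ψ))
    (hcap : Y ∩ closure Ψ = Y ∩ Ψ) (hne : (Y ∩ Ψ).Nonempty)
    (y₀ : X) (hy₀ : y₀ ∈ Y) (R : ℝ) (hR : 0 < R)
    (ε : ℝ) (hε₀ : 0 < ε) (hε₁ : ε < 1) :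
    ∃ K : Set X, IsCompact K ∧ K ⊆ flowSet φ (Set.Ioo (-R) R) Ψ ∧
      ∃ T₀ : ℝ, 0 < T₀ ∧ ∀ T : ℝ, T₀ ≤ T →
        ENNReal.ofReal (1 - ε) *
            volume {t ∈ Set.Icc (-T) T | φ t y₀ ∈ flowSet φ (Set.Ioo (-R) R) Ψ} ≤
          volume {t ∈ Set.Icc (-T) T | φ t y₀ ∈ K} :=
  asymptotic_tightness_of_statistical_measures_general φ Y hYcl hmin Ψ hΨpre hΨsec hcap y₀ hy₀ R hR
    ε hε₀ hε₁
end
end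

section
/- Let Y ⊆ X be a φ-minimal set consisting of more than one φ-orbit, and assume there exists a precompact section Ψ ⊆ X for φ such that for every R > 0 the set B_R := φ_{(-R,R)}Ψ is open in X, and Y ∩ closure(Ψ) = Y ∩ Ψ ≠ ∅. Fix y₀ ∈ Y, R > 0, and write B = B_R. Suppose T_n → ∞ is a sequence of positive reals and ν is a finite Borel measure on X such that for every continuous compactly supported function f : X → ℝ with support contained in B, the ratios (∫_{-T_n}^{T_n} f(φ t y₀) dt) / (vol {t ∈ [-T_n, T_n] : φ t y₀ ∈ B}) converge to ∫ f dν. Then ν is invariant along flow lines in B: for every s ∈ ℝ and every continuous compactly supported f : X → ℝ with support of f contained in B and support of (f ∘ φ s) contained in B, we have ∫ f dν = ∫ (f ∘ φ s) dν. -/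
open MeasureTheory

noncomputable section

variable {X : Type*} [TopologicalSpace X]

/-!
Along the orbit of `y₀`, the times spent in `B = φ_{(-R,R)}Ψ` form a union of intervals of
length at least `2R`. Since `y₀` accumulates on a point of `Y` off its own orbit, and the orbit
of that point meets the open set `B`, the orbit of `y₀` enters `B` at arbitrarily large times,
so the normalising volumes tend to infinity. Replacing `f` by `f ∘ φ s` shifts the time
integral by `s`, which changes the numerator only by two boundary terms of size at most
`‖f‖∞ |s|`; these vanish after normalisation.
-/

open Filter Set Topology

lemma mem_flowOrbit_of_mem_flowOrbit {φ : Flow ℝ X} {x y z : X} (hy : y ∈ flowOrbit φ x)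
    (hz : z ∈ flowOrbit φ x) : z ∈ flowOrbit φ y := by
  obtain ⟨a, rfl⟩ := hy
  obtain ⟨b, rfl⟩ := hz
  exact ⟨b - a, by simp only [← φ.map_add, sub_add_cancel]⟩

lemma exists_Ioo_subset_setOf_mem_flowSet {φ : Flow ℝ X} {Ψ : Set X} {R t : ℝ} {x : X}
    (ht : φ t x ∈ flowSet φ (Ioo (-R) R) Ψ) :
    ∃ c, t ∈ Ioo c (c + 2 * R) ∧
      Ioo c (c + 2 * R) ⊆ {τ | φ τ x ∈ flowSet φ (Ioo (-R) R) Ψ} := by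
  obtain ⟨u, ⟨hu₁, hu₂⟩, x', hx', hux⟩ := ht
  refine ⟨t - u - R, ⟨by linarith, by linarith⟩, fun τ ⟨hτ₁, hτ₂⟩ => ?_⟩
  refine ⟨τ - t + u, ⟨by linarith, by linarith⟩, x', hx', ?_⟩
  rw [φ.map_add, ← hux, ← φ.map_add]
  ring_nf

lemma not_isBounded_setOf_mem_of_mem_closure_flowOrbit [T2Space X] {φ : Flow ℝ X} {x q : X}
    {U : Set X} (hq : q ∈ closure (flowOrbit φ x)) (hqx : q ∉ flowOrbit φ x) (hU : IsOpen U)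
    (hqU : (flowOrbit φ q ∩ U).Nonempty) : ¬ Bornology.IsBounded {t | φ t x ∈ U} := by
  intro hbdd
  obtain ⟨M, hM⟩ := isBounded_iff_forall_norm_le.1 hbdd
  obtain ⟨_, ⟨u, rfl⟩, hu⟩ := hqU
  set K := (fun t => φ t x) '' Icc (-(M + |u|)) (M + |u|)
  have hK : IsClosed K :=
    (isCompact_Icc.image (φ.continuous continuous_id continuous_const)).isClosed
  have hqK : q ∉ K := fun ⟨t, _, ht⟩ => hqx ⟨t, ht⟩
  obtain ⟨_, ⟨hwU, hwK⟩, ⟨t, rfl⟩⟩ := mem_closure_iff.1 hq _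
    ((hU.preimage (φ.continuous_toFun u)).inter hK.isOpen_compl) ⟨hu, hqK⟩
  have hut : |u + t| ≤ M := hM (u + t) (by rw [mem_ofPred_eq, φ.map_add]; exact hwU)
  refine hwK ⟨t, abs_le.1 ?_, rfl⟩
  calc |t| = |u + t - u| := by rw [add_sub_cancel_left]
    _ ≤ |u + t| + |u| := abs_sub _ _
    _ ≤ M + |u| := by linarith

section VisitVolume

variable {S : Set ℝ} {L : ℝ}

lemma exists_le_volume_Icc_inter (hL : 0 ≤ L)
    (hS : ∀ t ∈ S, ∃ c, t ∈ Ioo c (c + L) ∧ Ioo c (c + L) ⊆ S)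
    (hunb : ¬ Bornology.IsBounded S) (n : ℕ) :
    ∃ M, ENNReal.ofReal (n * L) ≤ volume (Icc (-M) M ∩ S) := by
  induction n with
  | zero => exact ⟨0, by simp⟩
  | succ n ih =>
    obtain ⟨M, hM⟩ := ih
    -- a point of `S` beyond `M + L` brings an interval of length `L` disjoint from `[-M, M]`
    obtain ⟨t, htS, htM⟩ : ∃ t ∈ S, M + L < |t| := by
      by_contra! h
      exact hunb (isBounded_iff_forall_norm_le.2 ⟨M + L, h⟩)
    obtain ⟨c, ⟨hc₁, hc₂⟩, hcS⟩ := hS t htS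
    have hdisj : Disjoint (Icc (-M) M ∩ S) (Ioo c (c + L)) := by
      refine disjoint_left.2 fun τ ⟨⟨hτ₁, hτ₂⟩, _⟩ ⟨hτ₃, hτ₄⟩ => ?_
      cases abs_cases t <;> linarith
    have hsub : Icc (-M) M ∩ S ∪ Ioo c (c + L) ⊆ Icc (-(|t| + L)) (|t| + L) ∩ S := by
      rintro τ (⟨⟨hτ₁, hτ₂⟩, hτS⟩ | ⟨hτ₁, hτ₂⟩)
      · exact ⟨⟨by linarith [abs_nonneg t], by linarith [abs_nonneg t]⟩, hτS⟩
      · exact ⟨⟨by cases abs_cases t <;> linarith, by cases abs_cases t <;> linarith⟩,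
          hcS ⟨hτ₁, hτ₂⟩⟩
    refine ⟨|t| + L, ?_⟩
    calc ENNReal.ofReal ((n + 1 : ℕ) * L)
        = ENNReal.ofReal (n * L) + volume (Ioo c (c + L)) := by
          rw [Real.volume_Ioo, add_sub_cancel_left, ← ENNReal.ofReal_add (by positivity) hL]
          push_cast
          ring_nf
      _ ≤ volume (Icc (-M) M ∩ S) + volume (Ioo c (c + L)) := by gcongr
      _ = volume (Icc (-M) M ∩ S ∪ Ioo c (c + L)) :=
          (measure_union hdisj measurableSet_Ioo).symm
      _ ≤ _ := measure_mono hsub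

lemma tendsto_measureReal_Icc_inter_atTop (hL : 0 < L)
    (hS : ∀ t ∈ S, ∃ c, t ∈ Ioo c (c + L) ∧ Ioo c (c + L) ⊆ S)
    (hunb : ¬ Bornology.IsBounded S) :
    Tendsto (fun M => volume.real (Icc (-M) M ∩ S)) atTop atTop := by
  have hfin : ∀ M, volume (Icc (-M) M ∩ S) ≠ ⊤ := fun M =>
    ne_top_of_le_ne_top (by simp [Real.volume_Icc]) (measure_mono inter_subset_left)
  refine tendsto_atTop_atTop_of_monotone
    (fun M M' h => measureReal_mono (inter_subset_inter_left _ (Icc_subset_Icc (by linarith) h))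
      (hfin M')) fun b => ?_
  obtain ⟨n, hn⟩ := exists_nat_ge (b / L)
  obtain ⟨M, hM⟩ := exists_le_volume_Icc_inter hL.le hS hunb n
  refine ⟨M, (div_le_iff₀ hL).1 hn |>.trans ?_⟩
  exact (ENNReal.ofReal_le_iff_le_toReal (hfin M)).1 hM

end VisitVolume

lemma abs_intervalIntegral_sub_comp_add_left_le {G : ℝ → ℝ} {C : ℝ}
    (hG : LocallyIntegrable G) (hC : ∀ t, ‖G t‖ ≤ C) (a b s : ℝ) :
    |(∫ t in a..b, G t) - ∫ t in a..b, G (s + t)| ≤ 2 * C * |s| := by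
  have hii : ∀ x y : ℝ, IntervalIntegrable G volume x y := fun x y =>
    intervalIntegrable_iff.2 <|
      (hG.integrableOn_isCompact isCompact_uIcc).mono_set uIoc_subset_uIcc
  have hsplit : (∫ t in a..b, G t) - ∫ t in a..b, G (s + t) =
      (∫ t in a..s + a, G t) - ∫ t in b..s + b, G t := by
    rw [intervalIntegral.integral_comp_add_left,
      ← intervalIntegral.integral_add_adjacent_intervals (hii a (s + a)) (hii (s + a) b),
      ← intervalIntegral.integral_add_adjacent_intervals (hii (s + a) b) (hii b (s + b))]
    ring
  have hbound : ∀ c, |∫ t in c..s + c, G t| ≤ C * |s| := fun c => by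
    simpa only [add_sub_cancel_right, Real.norm_eq_abs] using
      intervalIntegral.norm_integral_le_of_norm_le_const (a := c) (b := s + c) fun t _ => hC t
  rw [hsplit]
  linarith [abs_sub ((∫ t in a..s + a, G t)) (∫ t in b..s + b, G t), hbound a, hbound b]

lemma eq_of_tendsto_div_of_abs_sub_le {ι : Type*} {l : Filter ι} [l.NeBot] {A A' D : ι → ℝ}
    {a a' C : ℝ} (hD : Tendsto D l atTop) (hAA' : ∀ᶠ i in l, |A i - A' i| ≤ C)
    (hA : Tendsto (fun i => A i / D i) l (𝓝 a))
    (hA' : Tendsto (fun i => A' i / D i) l (𝓝 a')) : a = a' := by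
  have hzero : Tendsto (fun i => (A i - A' i) / D i) l (𝓝 0) := by
    refine squeeze_zero_norm' ?_ ((tendsto_const_nhds (x := C)).div_atTop hD)
    filter_upwards [hAA', hD.eventually_gt_atTop 0] with i hi hDi
    rw [Real.norm_eq_abs, abs_div, abs_of_pos hDi]
    gcongr
  have hsub : Tendsto (fun i => (A i - A' i) / D i) l (𝓝 (a - a')) := by
    simpa only [sub_div] using hA.sub hA'
  exact sub_eq_zero.1 (tendsto_nhds_unique hsub hzero)

theorem limit_statistical_measure_flow_invariant_in_B_general
    [T2Space X] [MeasurableSpace X]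
    (φ : Flow ℝ X) (Y : Set X)
    (hmin : ∀ y ∈ Y, closure (flowOrbit φ y) = Y)
    (hmulti : ∃ y ∈ Y, ∃ y' ∈ Y, y' ∉ flowOrbit φ y)
    (Ψ : Set X)
    (hopen : ∀ R : ℝ, 0 < R → IsOpen (flowSet φ (Set.Ioo (-R) R) Ψ))
    (hne : (Y ∩ Ψ).Nonempty)
    (y₀ : X) (hy₀ : y₀ ∈ Y) (R : ℝ) (hR : 0 < R)
    (B : Set X) (hB : B = flowSet φ (Set.Ioo (-R) R) Ψ)
    (T : ℕ → ℝ)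
    (hT : Filter.Tendsto T Filter.atTop Filter.atTop)
    (ν : Measure X)
    (hconv : ∀ f : X → ℝ, Continuous f → HasCompactSupport f → tsupport f ⊆ B →
      Filter.Tendsto
        (fun n => (∫ t in Set.Icc (-(T n)) (T n), f (φ t y₀)) /
          (volume {t ∈ Set.Icc (-(T n)) (T n) | φ t y₀ ∈ B}).toReal)
        Filter.atTop (nhds (∫ x, f x ∂ν)))
    (s : ℝ) (f : X → ℝ) (hf : Continuous f) (hfc : HasCompactSupport f)
    (hfsupp : tsupport f ⊆ B) (hfsupp' : tsupport (fun x => f (φ s x)) ⊆ B) :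
    ∫ x, f x ∂ν = ∫ x, f (φ s x) ∂ν := by
  obtain ⟨p, hpY, hpΨ⟩ := hne
  have hBopen : IsOpen B := hB ▸ hopen R hR
  have hpB : p ∈ B := hB ▸ ⟨0, ⟨by linarith, hR⟩, p, hpΨ, (φ.map_zero_apply p).symm⟩
  obtain ⟨q, hqY, hq⟩ : ∃ q ∈ Y, q ∉ flowOrbit φ y₀ := by
    obtain ⟨y, hy, y', hy', hy'y⟩ := hmulti
    by_contra! h
    exact hy'y (mem_flowOrbit_of_mem_flowOrbit (h y hy) (h y' hy'))
  have hqB : (flowOrbit φ q ∩ B).Nonempty :=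
    (mem_closure_iff.1 ((hmin q hqY).symm ▸ hpY) B hBopen hpB).mono fun _ h => ⟨h.2, h.1⟩
  have hvisits := not_isBounded_setOf_mem_of_mem_closure_flowOrbit ((hmin y₀ hy₀).symm ▸ hqY)
    hq hBopen hqB
  have hD : Tendsto (fun M => volume.real (Icc (-M) M ∩ {t | φ t y₀ ∈ B})) atTop atTop :=
    tendsto_measureReal_Icc_inter_atTop (by positivity)
      (fun t ht => hB ▸ exists_Ioo_subset_setOf_mem_flowSet (hB ▸ ht)) hvisits
  obtain ⟨C, hC⟩ := hfc.exists_bound_of_continuous hf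
  refine eq_of_tendsto_div_of_abs_sub_le (C := 2 * C * |s|) (hD.comp hT) ?_
    (hconv f hf hfc hfsupp)
    (hconv _ (hf.comp (φ.continuous_toFun s)) (hfc.comp_homeomorph (φ.toHomeomorph s)) hfsupp')
  filter_upwards [hT.eventually_ge_atTop 0] with n hn
  simp only [integral_Icc_eq_integral_Ioc, ← φ.map_add,
    ← intervalIntegral.integral_of_le (by linarith : -T n ≤ T n)]
  exact abs_intervalIntegral_sub_comp_add_left_le (G := fun t => f (φ t y₀))
    (hf.comp (φ.continuous continuous_id continuous_const)).locallyIntegrable (fun t => hC _) _ _ s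

/-- Any weak limit `ν` of the statistical measures along the orbit of `y₀` in
`B = φ_{(-R,R)}Ψ` is invariant along flow lines in `B`. -/
theorem limit_statistical_measure_flow_invariant_in_B
    [LocallyCompactSpace X] [SecondCountableTopology X] [T2Space X]
    [MeasurableSpace X] [BorelSpace X]
    (φ : Flow ℝ X) (Y : Set X) (hYne : Y.Nonempty) (hYcl : IsClosed Y)
    (hmin : ∀ y ∈ Y, closure (flowOrbit φ y) = Y)
    (hmulti : ∃ y ∈ Y, ∃ y' ∈ Y, y' ∉ flowOrbit φ y)
    (Ψ : Set X) (hΨpre : IsCompact (closure Ψ)) (hΨsec : IsFlowSection φ Ψ)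
    (hopen : ∀ R : ℝ, 0 < R → IsOpen (flowSet φ (Set.Ioo (-R) R) Ψ))
    (hcap : Y ∩ closure Ψ = Y ∩ Ψ) (hne : (Y ∩ Ψ).Nonempty)
    (y₀ : X) (hy₀ : y₀ ∈ Y) (R : ℝ) (hR : 0 < R)
    (B : Set X) (hB : B = flowSet φ (Set.Ioo (-R) R) Ψ)
    (T : ℕ → ℝ) (hTpos : ∀ n, 0 < T n)
    (hT : Filter.Tendsto T Filter.atTop Filter.atTop)
    (ν : Measure X) (hν : IsFiniteMeasure ν)
    (hconv : ∀ f : X → ℝ, Continuous f → HasCompactSupport f → tsupport f ⊆ B →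
      Filter.Tendsto
        (fun n => (∫ t in Set.Icc (-(T n)) (T n), f (φ t y₀)) /
          (volume {t ∈ Set.Icc (-(T n)) (T n) | φ t y₀ ∈ B}).toReal)
        Filter.atTop (nhds (∫ x, f x ∂ν)))
    (s : ℝ) (f : X → ℝ) (hf : Continuous f) (hfc : HasCompactSupport f)
    (hfsupp : tsupport f ⊆ B) (hfsupp' : tsupport (fun x => f (φ s x)) ⊆ B) :
    ∫ x, f x ∂ν = ∫ x, f (φ s x) ∂ν :=
  limit_statistical_measure_flow_invariant_in_B_general φ Y hmin hmulti Ψ hopen hne y₀ hy₀ R hR B hB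
    T hT ν hconv s f hf hfc hfsupp hfsupp'
end
end

section
/- Let δ > 0 and let E ⊆ ℝ be a compact set with E ⊆ (δ, ∞). For each integer m ≥ 1 let mE = {e₁ + e₂ + ⋯ + e_m : e₁, …, e_m ∈ E} denote the m-fold sumset of E. Then the union ⋃_{m ≥ 1} mE is a closed subset of ℝ. -/
/-!
Every element of `mE` is at least `m δ`, so a bounded neighbourhood of a point meets only
finitely many of the compact, hence closed, sets `mE`; a locally finite union of closed sets
is closed.
-/

/-- The `m`-fold sumset `mE = {e₁ + ⋯ + e_m : eᵢ ∈ E}` of a set `E ⊆ ℝ`. -/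
def sumset (m : ℕ) (E : Set ℝ) : Set ℝ :=
  {x | ∃ f : Fin m → ℝ, (∀ i, f i ∈ E) ∧ ∑ i, f i = x}

open Filter Set

theorem sumset_eq_image (m : ℕ) (E : Set ℝ) :
    sumset m E = (fun f : Fin m → ℝ => ∑ i, f i) '' univ.pi fun _ => E := by
  ext x
  simp [sumset, Set.mem_pi, eq_comm]

theorem IsCompact.sumset {E : Set ℝ} (hE : IsCompact E) (m : ℕ) : IsCompact (sumset m E) := by
  rw [sumset_eq_image]
  exact (isCompact_univ_pi fun _ => hE).image (by fun_prop)

theorem sumset_subset_Ici_mul {E : Set ℝ} {δ : ℝ} (hE : E ⊆ Ici δ) (m : ℕ) :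
    sumset m E ⊆ Ici (m * δ) := by
  rintro _ ⟨f, hf, rfl⟩
  calc (m : ℝ) * δ = ∑ _i : Fin m, δ := by simp
    _ ≤ ∑ i, f i := Finset.sum_le_sum fun i _ => hE (hf i)

theorem locallyFinite_of_subset_Ici {ι α : Type*} [TopologicalSpace α] [LinearOrder α]
    [OrderTopology α] [NoMaxOrder α] {s : ι → Set α} {a : ι → α}
    (ha : Tendsto a cofinite atTop) (hs : ∀ i, s i ⊆ Ici (a i)) : LocallyFinite s := by
  intro x
  obtain ⟨b, hxb⟩ := exists_gt x
  refine ⟨Iio b, Iio_mem_nhds hxb, (eventually_cofinite.mp (ha.eventually_ge_atTop b)).subset ?_⟩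
  rintro i ⟨y, hyi, hyb⟩ hbi
  exact absurd (hbi.trans (hs i hyi)) (not_le.mpr hyb)

/-- If `E` is a compact subset of `(δ, ∞)` with `δ > 0`, then the union of the `m`-fold
sumsets `mE` over `m ≥ 1` is closed in `ℝ`. -/
theorem isClosed_iUnion_sumsets (δ : ℝ) (hδ : 0 < δ) (E : Set ℝ)
    (hE : IsCompact E) (hEsub : E ⊆ Set.Ioi δ) :
    IsClosed (⋃ m : ℕ, ⋃ _ : 1 ≤ m, sumset m E) := by
  have hgrowth : Tendsto (fun m : ℕ => (m : ℝ) * δ) cofinite atTop := by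
    rw [Nat.cofinite_eq_atTop]
    exact tendsto_natCast_atTop_atTop.atTop_mul_const hδ
  have hbound (m : ℕ) : ⋃ _ : 1 ≤ m, sumset m E ⊆ Ici (m * δ) :=
    iUnion_subset fun _ => sumset_subset_Ici_mul (hEsub.trans Ioi_subset_Ici_self) m
  exact (locallyFinite_of_subset_Ici hgrowth hbound).isClosed_iUnion
    fun m => isClosed_iUnion_of_finite fun _ => (hE.sumset m).isClosed
end

section
/- Let Γ be a discrete, torsion-free subgroup of G = PSL(2,ℝ) and let y, w ∈ G/Γ. Suppose y and w are A-proximal in forward time: there exist a sequence t_n → ∞ of real numbers and a sequence g_n → 1 in G such that a_{t_n}·y = g_n·(a_{t_n}·w) for every n. Then the horocycle orbit closures of y and w coincide: closure(N·y) = closure(N·w). -/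
noncomputable section

/-- `SL(2,ℝ)`. -/
abbrev SL2 := Matrix.SpecialLinearGroup (Fin 2) ℝ

/-- The metric on `SL(2,ℝ)` induced from the entries of the matrix. -/
instance : MetricSpace SL2 :=
  MetricSpace.induced (fun g : SL2 => Matrix.of.symm (g : Matrix (Fin 2) (Fin 2) ℝ))
    (fun _ _ h => Subtype.ext (Matrix.of.symm.injective h)) inferInstance

/-- The lower-triangular unipotent matrix `[[1,0],[s,1]]`. -/
def nMat (s : ℝ) : SL2 := ⟨!![1, 0; s, 1], by simp [Matrix.det_fin_two_of]⟩

/-- The diagonal matrix `diag(e^{t/2}, e^{-t/2})`. -/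
def aMat (t : ℝ) : SL2 :=
  ⟨!![Real.exp (t / 2), 0; 0, Real.exp (-(t / 2))], by
    simp [Matrix.det_fin_two_of, ← Real.exp_add]⟩

/-- `PSL(2,ℝ)`: the quotient of `SL(2,ℝ)` by its center `{±I}`. -/
abbrev PSL2 := SL2 ⧸ Subgroup.center SL2

/-- The class of `nMat s` in `PSL(2,ℝ)`, generating the stable horocycle flow. -/
def nPSL (s : ℝ) : PSL2 := QuotientGroup.mk (nMat s)

/-- The class of `aMat t` in `PSL(2,ℝ)`, generating the geodesic flow. -/
def aPSL (t : ℝ) : PSL2 := QuotientGroup.mk (aMat t)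

/-- The horocycle (`N`-) orbit of a point of `G/Γ`. -/
def Norbit {Γ : Subgroup PSL2} (x : PSL2 ⧸ Γ) : Set (PSL2 ⧸ Γ) :=
  Set.range (fun s : ℝ => nPSL s • x)

/-- A monoid is torsion-free if no element other than `1` has finite order
(the definition `Monoid.IsTorsionFree` of the older Mathlib, since removed). -/
def Monoid.IsTorsionFree (G : Type*) [Monoid G] : Prop :=
  ∀ g : G, g ≠ 1 → ¬IsOfFinOrder g

/-
Conjugating h = [[a, b], [c, d]] by the geodesic flow gives
a_t⁻¹ h a_t = [[a, b e^{-t}], [c e^t, d]]: the upper entry is contracted, the lower one expanded.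
The expansion is absorbed by the horocycle element n_{-c e^t / a} on the left, leaving
[[a, b e^{-t}], [0, d - bc/a]], which tends to 1 as t → ∞ and h → 1. Hence if a_t y = g a_t w
with g → 1, then y = a_t⁻¹ g a_t w = n_s ε w with ε → 1, so w is a limit of points of the
horocycle orbit of y; by symmetry, the two orbit closures contain each other.
-/

open Filter Topology Real Pointwise

theorem Matrix.SpecialLinearGroup.tendsto_nhds_iff_entries {n R ι : Type*} [Fintype n]
    [DecidableEq n] [CommRing R] [TopologicalSpace R] {l : Filter ι}
    {f : ι → Matrix.SpecialLinearGroup n R} {A : Matrix.SpecialLinearGroup n R} :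
    Tendsto f l (𝓝 A) ↔ ∀ i j, Tendsto (fun x => f x i j) l (𝓝 (A i j)) :=
  IsInducing.subtypeVal.tendsto_nhds_iff.trans <|
    tendsto_pi_nhds.trans <| forall_congr' fun _ => tendsto_pi_nhds

theorem nMat_mul_apply (s : ℝ) (k : SL2) :
    ((nMat s * k : SL2) : Matrix (Fin 2) (Fin 2) ℝ) =
      !![k 0 0, k 0 1; s * k 0 0 + k 1 0, s * k 0 1 + k 1 1] := by
  rw [Matrix.SpecialLinearGroup.coe_mul, Matrix.eta_fin_two (k : Matrix _ _ ℝ)]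
  simp [nMat]

theorem aMat_inv_mul_mul_aMat (τ : ℝ) (h : SL2) :
    (((aMat τ)⁻¹ * h * aMat τ : SL2) : Matrix (Fin 2) (Fin 2) ℝ) =
      !![h 0 0, h 0 1 * exp (-τ); h 1 0 * exp τ, h 1 1] := by
  have h₁ : exp (-(τ / 2)) * exp (τ / 2) = 1 := by rw [← exp_add]; simp
  have h₂ : exp (-(τ / 2)) * exp (-(τ / 2)) = exp (-τ) := by rw [← exp_add]; ring_nf
  have h₃ : exp (τ / 2) * exp (τ / 2) = exp τ := by rw [← exp_add]; ring_nf
  rw [Matrix.SpecialLinearGroup.coe_mul, Matrix.SpecialLinearGroup.coe_mul,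
    Matrix.SpecialLinearGroup.coe_inv, Matrix.adjugate_fin_two,
    Matrix.eta_fin_two (h : Matrix _ _ ℝ)]
  simp [aMat]
  grind

theorem nMat_mul_aMat_conj_apply (s τ : ℝ) (h : SL2) :
    ((nMat s * ((aMat τ)⁻¹ * h * aMat τ) : SL2) : Matrix (Fin 2) (Fin 2) ℝ) =
      !![h 0 0, h 0 1 * exp (-τ);
        s * h 0 0 + h 1 0 * exp τ, s * (h 0 1 * exp (-τ)) + h 1 1] := by
  rw [nMat_mul_apply, aMat_inv_mul_mul_aMat]
  simp

theorem tendsto_nMat_mul_aMat_conj :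
    Tendsto (fun p : ℝ × SL2 =>
        nMat (-(p.2 1 0 / p.2 0 0 * exp p.1)) * ((aMat p.1)⁻¹ * p.2 * aMat p.1))
      (atTop ×ˢ 𝓝 1) (𝓝 1) := by
  have entry (i j : Fin 2) : Tendsto (fun p : ℝ × SL2 => p.2 i j) (atTop ×ˢ 𝓝 1)
      (𝓝 ((1 : Matrix (Fin 2) (Fin 2) ℝ) i j)) :=
    Matrix.SpecialLinearGroup.tendsto_nhds_iff_entries.1 tendsto_snd i j
  have hexp : Tendsto (fun p : ℝ × SL2 => exp (-p.1)) (atTop ×ˢ 𝓝 1) (𝓝 0) :=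
    tendsto_exp_neg_atTop_nhds_zero.comp tendsto_fst
  have hne : ∀ᶠ p : ℝ × SL2 in atTop ×ˢ 𝓝 1, p.2 0 0 ≠ 0 :=
    (entry 0 0).eventually_ne (by simp)
  rw [Matrix.SpecialLinearGroup.tendsto_nhds_iff_entries]
  intro i j
  simp only [nMat_mul_aMat_conj_apply]
  fin_cases i <;> fin_cases j <;>
    simp only [Matrix.SpecialLinearGroup.coe_one, Matrix.one_fin_two, Fin.zero_eta, Fin.mk_one,
      Matrix.of_apply, Matrix.cons_val', Matrix.cons_val_zero, Matrix.cons_val_one,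
      Matrix.empty_val', Matrix.cons_val_fin_one]
  · simpa using entry 0 0
  · simpa using (entry 0 1).mul hexp
  · refine tendsto_const_nhds.congr' ?_
    filter_upwards [hne] with p hp
    field_simp
    ring
  · convert (entry 1 1).sub (((entry 1 0).div (entry 0 0) (by simp)).mul (entry 0 1)) using 1
    · funext p
      rw [Pi.div_apply, exp_neg]
      field_simp
      ring
    · simp

theorem eventually_exists_nPSL_mul_aPSL_conj_mem {U : Set PSL2} (hU : U ∈ 𝓝 1) :
    ∀ᶠ p : ℝ × PSL2 in atTop ×ˢ 𝓝 1, ∃ s, nPSL s * ((aPSL p.1)⁻¹ * p.2 * aPSL p.1) ∈ U := by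
  rw [← QuotientGroup.mk_one, QuotientGroup.nhds_eq, ← map_id (f := atTop), prod_map_map_eq,
    eventually_map]
  filter_upwards [tendsto_nMat_mul_aMat_conj (QuotientGroup.continuous_mk.tendsto 1 hU)]
    with p hp
  exact ⟨_, hp⟩

theorem nPSL_add (s u : ℝ) : nPSL (s + u) = nPSL s * nPSL u := by
  rw [nPSL, nPSL, nPSL, ← QuotientGroup.mk_mul]
  congr 1
  ext : 1
  rw [nMat_mul_apply]
  simp [nMat]

theorem nPSL_smul_Norbit_subset {Γ : Subgroup PSL2} (s : ℝ) (x : PSL2 ⧸ Γ) :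
    nPSL s • Norbit x ⊆ Norbit x := by
  rintro _ ⟨_, ⟨u, rfl⟩, rfl⟩
  exact ⟨s + u, by simp only [nPSL_add, mul_smul]⟩

theorem closure_Norbit_subset_of_mem {Γ : Subgroup PSL2} {y w : PSL2 ⧸ Γ}
    (h : y ∈ closure (Norbit w)) : closure (Norbit y) ⊆ closure (Norbit w) :=
  closure_minimal (Set.range_subset_iff.2 fun s =>
      (smul_closure_subset _ _).trans (closure_mono (nPSL_smul_Norbit_subset s w))
        (Set.smul_mem_smul_set h))
    isClosed_closure

theorem mem_closure_Norbit_of_A_proximal {Γ : Subgroup PSL2} {y w : PSL2 ⧸ Γ} {t : ℕ → ℝ}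
    {g : ℕ → PSL2} (ht : Tendsto t atTop atTop) (hg : Tendsto g atTop (𝓝 1))
    (hprox : ∀ n, aPSL (t n) • y = g n • (aPSL (t n) • w)) :
    w ∈ closure (Norbit y) := by
  refine mem_closure_iff_nhds.2 fun V hV => ?_
  have hU : (· • w) ⁻¹' V ∈ 𝓝 (1 : PSL2) :=
    (continuous_id.smul continuous_const).tendsto' 1 w (one_smul _ w) hV
  obtain ⟨n, s, hs⟩ :=
    ((ht.prodMk hg).eventually (eventually_exists_nPSL_mul_aPSL_conj_mem hU)).exists
  refine ⟨nPSL s • y, ?_, s, rfl⟩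
  have : nPSL s • y = (nPSL s * ((aPSL (t n))⁻¹ * g n * aPSL (t n))) • w := by
    rw [mul_smul, mul_smul, mul_smul, ← hprox n, inv_smul_smul]
  rwa [this]

theorem horocycle_orbit_closure_eq_of_A_proximal_general
    (Γ : Subgroup PSL2) (y w : PSL2 ⧸ Γ) (t : ℕ → ℝ) (g : ℕ → PSL2)
    (ht : Filter.Tendsto t Filter.atTop Filter.atTop)
    (hg : Filter.Tendsto g Filter.atTop (nhds 1))
    (hprox : ∀ n, aPSL (t n) • y = g n • (aPSL (t n) • w)) :
    closure (Norbit y) = closure (Norbit w) := by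
  have hwy : w ∈ closure (Norbit y) := mem_closure_Norbit_of_A_proximal ht hg hprox
  have hyw : y ∈ closure (Norbit w) :=
    mem_closure_Norbit_of_A_proximal ht (by simpa using hg.inv) fun n => by
      rw [hprox n, inv_smul_smul]
  exact (closure_Norbit_subset_of_mem hyw).antisymm (closure_Norbit_subset_of_mem hwy)

/-- If `y, w ∈ G/Γ` are `A`-proximal in forward time, then their horocycle orbit
closures coincide. -/
theorem horocycle_orbit_closure_eq_of_A_proximal
    (Γ : Subgroup PSL2) (hΓd : DiscreteTopology Γ) (hΓt : Monoid.IsTorsionFree Γ)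
    (y w : PSL2 ⧸ Γ) (t : ℕ → ℝ) (g : ℕ → PSL2)
    (ht : Filter.Tendsto t Filter.atTop Filter.atTop)
    (hg : Filter.Tendsto g Filter.atTop (nhds 1))
    (hprox : ∀ n, aPSL (t n) • y = g n • (aPSL (t n) • w)) :
    closure (Norbit y) = closure (Norbit w) :=
  horocycle_orbit_closure_eq_of_A_proximal_general Γ y w t g ht hg hprox
end
end

section
/- Let S ⊆ ℝ be a nonempty set and g ∈ SL(2,ℝ). Then the set {n_s · a_t · g : s ∈ ℝ, t ∈ S} ⊆ SL(2,ℝ) has Hausdorff dimension equal to 1 + dimH S, where dimH S is the Hausdorff dimension of S as a subset of ℝ. (Dimension of an N-saturated product set over an A-slice.) -/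
noncomputable section

/-! The map `(s, t) ↦ n_s a_t g` is smooth with a smooth left inverse (which reads `s` and `t` off
the entries of `x g⁻¹`), so it preserves Hausdorff dimension and the claim becomes
`dimH (ℝ × S) = 1 + dimH S`. Both inequalities compare covers. A cover of `S` by sets of
diameters `r_n` gives a cover of `[a, b] × S` by about `(b - a) / r_n` squares of side `r_n` per
set, so `μH[d] S = 0` forces `μH[d + 1] ([a, b] × S) = 0`. Conversely every vertical slice of a
cover of `[a, b] × S` covers `S`; integrating the resulting lower bound over `x ∈ [a, b]` shows
that `μH[d] S > 0` forces `μH[d + 1] ([a, b] × S) > 0`. -/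

open Set Topology MeasureTheory Measure Metric
open scoped ENNReal NNReal

section HausdorffNull

variable {X : Type*} [EMetricSpace X]

lemma iSup_nonempty_ediam_rpow {d : ℝ} (hd : 0 < d) (t : Set X) :
    (⨆ _ : t.Nonempty, ediam t ^ d) = ediam t ^ d := by
  rcases t.eq_empty_or_nonempty with rfl | ht
  · simp [ENNReal.zero_rpow_of_pos hd]
  · exact iSup_pos ht

theorem hausdorffMeasure_eq_zero_iff [MeasurableSpace X] [BorelSpace X] {d : ℝ} (hd : 0 < d)
    {s : Set X} :
    μH[d] s = 0 ↔ ∀ ε > 0, ∃ t : ℕ → Set X, s ⊆ ⋃ n, t n ∧ ∑' n, ediam (t n) ^ d ≤ ε := by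
  simp_rw [hausdorffMeasure_apply, iSup_nonempty_ediam_rpow hd]
  constructor
  · intro h ε hε
    have h1 := (iSup₂_eq_bot.1 h 1 one_pos).trans_lt hε
    simp only [iInf_lt_iff] at h1
    obtain ⟨t, hst, -, ht⟩ := h1
    exact ⟨t, hst, ht.le⟩
  · intro h
    refine le_antisymm (le_of_forall_gt_imp_ge_of_dense fun ε hε => ?_) zero_le
    refine iSup₂_le fun r hr => ?_
    obtain ⟨t, hst, ht⟩ := h (min ε (r ^ d)) (lt_min hε (ENNReal.rpow_pos_of_nonneg hr hd.le))
    have hdiam : ∀ n, ediam (t n) ≤ r := fun n =>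
      (ENNReal.rpow_le_rpow_iff hd).1 <|
        (ENNReal.le_tsum n).trans (ht.trans (min_le_right _ _))
    exact iInf₂_le_of_le t hst <| iInf_le_of_le hdiam <| ht.trans (min_le_left _ _)

end HausdorffNull

section IntervalProduct

lemma ediam_prod_le {α β : Type*} [PseudoEMetricSpace α] [PseudoEMetricSpace β]
    (s : Set α) (t : Set β) : ediam (s ×ˢ t) ≤ max (ediam s) (ediam t) :=
  ediam_le fun p hp q hq => by
    rw [Prod.edist_eq]
    exact max_le_max (edist_le_ediam_of_mem hp.1 hq.1) (edist_le_ediam_of_mem hp.2 hq.2)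

lemma Icc_subset_iUnion_Icc_inter {a b L : ℝ} (hL : 0 < L) :
    Icc a b ⊆ ⋃ k : ℕ, Icc a b ∩ Icc (a + k * L) (a + (k + 1) * L) := by
  intro x hx
  refine mem_iUnion.2 ⟨⌊(x - a) / L⌋₊, hx, ?_, ?_⟩
  · have := Nat.floor_le (div_nonneg (sub_nonneg.2 hx.1) hL.le)
    rw [le_div_iff₀ hL] at this
    linarith
  · have := Nat.lt_floor_add_one ((x - a) / L)
    rw [div_lt_iff₀ hL] at this
    linarith

variable {X : Type*} [PseudoEMetricSpace X]

lemma tsum_ediam_Icc_inter_prod_rpow_le {a b : ℝ} (hab : a ≤ b) {L : ℝ≥0} (hL : 0 < L)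
    (hL1 : L ≤ 1) {d : ℝ} (hd : 0 ≤ d) {T : Set X} (hT : ediam T ≤ L) :
    ∑' k : ℕ, ediam ((Icc a b ∩ Icc (a + k * L) (a + (k + 1) * L)) ×ˢ T) ^ (d + 1)
      ≤ ENNReal.ofReal (b - a + 1) * (L : ℝ≥0∞) ^ d := by
  set N := ⌊(b - a) / L⌋₊ + 1
  have hLpos : (0 : ℝ) < L := hL
  have hN : (N : ℝ) * L ≤ b - a + 1 := by
    have := Nat.floor_le (div_nonneg (sub_nonneg.2 hab) hLpos.le)
    rw [le_div_iff₀ hLpos] at this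
    push_cast [N]
    nlinarith [show (L : ℝ) ≤ 1 from hL1]
  have hempty : ∀ k ∉ Finset.range N, Icc a b ∩ Icc (a + k * L) (a + (k + 1) * L) = ∅ := by
    intro k hk
    have hNk : (N : ℝ) ≤ k := by exact_mod_cast not_lt.1 (Finset.mem_range.not.1 hk)
    have := Nat.lt_floor_add_one ((b - a) / L)
    rw [div_lt_iff₀ hLpos] at this
    refine eq_empty_of_forall_notMem fun x hx => ?_
    have : (N : ℝ) * L ≤ k * L := mul_le_mul_of_nonneg_right hNk hLpos.le
    push_cast [N] at *
    linarith [hx.1.2, hx.2.1]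
  have hpiece : ∀ k : ℕ,
      ediam ((Icc a b ∩ Icc (a + k * L) (a + (k + 1) * L)) ×ˢ T) ≤ L := fun k =>
    (ediam_prod_le _ _).trans <| max_le
      ((ediam_mono inter_subset_right).trans (by rw [Real.ediam_Icc]; ring_nf; simp)) hT
  rw [tsum_eq_sum fun k hk => by
    rw [hempty k hk, empty_prod, ediam_empty, ENNReal.zero_rpow_of_pos (by linarith)]]
  calc ∑ k ∈ Finset.range N, ediam ((Icc a b ∩ Icc (a + k * L) (a + (k + 1) * L)) ×ˢ T) ^ (d + 1)
      ≤ ∑ k ∈ Finset.range N, (L : ℝ≥0∞) ^ (d + 1) :=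
        Finset.sum_le_sum fun k _ => ENNReal.rpow_le_rpow (hpiece k) (by linarith)
    _ = ENNReal.ofReal (N * L) * (L : ℝ≥0∞) ^ d := by
        rw [Finset.sum_const, Finset.card_range, nsmul_eq_mul,
          ENNReal.rpow_add_of_nonneg _ _ hd zero_le_one, ENNReal.rpow_one,
          ENNReal.ofReal_mul (Nat.cast_nonneg _), ENNReal.ofReal_natCast, ENNReal.ofReal_coe_nnreal]
        ring
    _ ≤ ENNReal.ofReal (b - a + 1) * (L : ℝ≥0∞) ^ d := by gcongr

end IntervalProduct

lemma exists_pos_majorant_of_tsum_rpow_le {d : ℝ} (hd : 0 < d) {D : ℕ → ℝ≥0∞} {δ : ℝ≥0∞}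
    (hδ : 0 < δ) (hδ1 : δ ≤ 1) (hD : ∑' n, D n ^ d ≤ δ) :
    ∃ L : ℕ → ℝ≥0, (∀ n, 0 < L n) ∧ (∀ n, L n ≤ 1) ∧ (∀ n, D n ≤ L n) ∧
      ∑' n, (L n : ℝ≥0∞) ^ d ≤ 2 * δ := by
  obtain ⟨η, hη0, hη⟩ := ENNReal.exists_pos_sum_of_countable hδ.ne' ℕ
  have hD1 : ∀ n, D n ≤ 1 := fun n => (ENNReal.rpow_le_rpow_iff hd).1 <| by
    rw [ENNReal.one_rpow]
    exact (ENNReal.le_tsum n).trans (hD.trans hδ1)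
  have hDtop : ∀ n, D n ≠ ∞ := fun n => ne_top_of_le_ne_top ENNReal.one_ne_top (hD1 n)
  have hη1 : ∀ n, η n ≤ 1 := fun n => ENNReal.coe_le_one_iff.1 <|
    (ENNReal.le_tsum n).trans (hη.le.trans hδ1)
  refine ⟨fun n => max (D n).toNNReal (η n ^ d⁻¹), fun n => ?_, fun n => ?_, fun n => ?_, ?_⟩
  · exact lt_max_of_lt_right (NNReal.rpow_pos (hη0 n))
  · exact max_le ((ENNReal.toNNReal_mono ENNReal.one_ne_top (hD1 n)).trans_eq
      ENNReal.toNNReal_one) (NNReal.rpow_le_one (hη1 n) (inv_nonneg.2 hd.le))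
  · rw [← ENNReal.coe_toNNReal (hDtop n)]
    exact ENNReal.coe_le_coe.2 (le_max_left _ _)
  have hLd : ∀ n, ((max (D n).toNNReal (η n ^ d⁻¹) : ℝ≥0) : ℝ≥0∞) ^ d ≤ D n ^ d + η n := by
    intro n
    rcases max_choice (D n).toNNReal (η n ^ d⁻¹) with h | h <;> rw [h]
    · rw [ENNReal.coe_toNNReal (hDtop n)]
      exact le_self_add
    · rw [← ENNReal.coe_rpow_of_nonneg _ hd.le, NNReal.rpow_inv_rpow hd.ne']
      exact le_add_self
  calc ∑' n, ((max (D n).toNNReal (η n ^ d⁻¹) : ℝ≥0) : ℝ≥0∞) ^ d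
      ≤ ∑' n, (D n ^ d + η n) := ENNReal.tsum_le_tsum hLd
    _ ≤ 2 * δ := by rw [ENNReal.tsum_add, two_mul]; exact add_le_add hD hη.le

theorem hausdorffMeasure_Icc_prod_eq_zero {X : Type*} [EMetricSpace X] [MeasurableSpace X]
    [BorelSpace X] {a b : ℝ} (hab : a ≤ b) {d : ℝ} (hd : 0 < d) {S : Set X}
    (hS : μH[d] S = 0) : μH[d + 1] (Icc a b ×ˢ S) = 0 := by
  rw [hausdorffMeasure_eq_zero_iff hd] at hS
  rw [hausdorffMeasure_eq_zero_iff (by linarith)]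
  intro ε hε
  set C := ENNReal.ofReal (b - a + 1)
  have hC : 2 * C ≠ 0 := mul_ne_zero two_ne_zero <| by
    simp only [C, ne_eq, ENNReal.ofReal_eq_zero, not_le]; linarith
  set δ := min 1 (ε / (2 * C))
  have hδ : 0 < δ := lt_min one_pos (ENNReal.div_pos hε.ne' (by finiteness))
  obtain ⟨t, hSt, ht⟩ := hS δ hδ
  -- the strip widths must be positive even where `t n` is a point
  obtain ⟨L, hL0, hL1, htL, hL⟩ := exists_pos_majorant_of_tsum_rpow_le hd hδ (min_le_left _ _) ht
  set u : ℕ × ℕ → Set (ℝ × X) := fun p =>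
    (Icc a b ∩ Icc (a + p.2 * L p.1) (a + (p.2 + 1) * L p.1)) ×ˢ t p.1
  refine ⟨fun m => u (Nat.pairEquiv.symm m), ?_, ?_⟩
  · rw [Nat.pairEquiv.symm.surjective.iUnion_comp u]
    rintro ⟨x, y⟩ ⟨hx, hy⟩
    obtain ⟨n, hn⟩ := mem_iUnion.1 (hSt hy)
    obtain ⟨k, hk⟩ := mem_iUnion.1 (Icc_subset_iUnion_Icc_inter (hL0 n) hx)
    exact mem_iUnion.2 ⟨(n, k), hk, hn⟩
  calc ∑' m, ediam (u (Nat.pairEquiv.symm m)) ^ (d + 1)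
      = ∑' n, ∑' k, ediam (u (n, k)) ^ (d + 1) :=
        (Nat.pairEquiv.symm.tsum_eq (fun p => ediam (u p) ^ (d + 1))).trans
          (ENNReal.tsum_prod (f := fun n k => ediam (u (n, k)) ^ (d + 1)))
    _ ≤ ∑' n, C * (L n : ℝ≥0∞) ^ d := ENNReal.tsum_le_tsum fun n =>
        (tsum_ediam_Icc_inter_prod_rpow_le hab (hL0 n) (hL1 n) hd.le (htL n) :)
    _ ≤ C * (2 * (ε / (2 * C))) := by
        rw [ENNReal.tsum_mul_left]
        exact mul_le_mul_right (hL.trans (mul_le_mul_right (min_le_right _ _) 2)) C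
    _ = ε := by rw [← mul_assoc, mul_comm C 2, ENNReal.mul_div_cancel hC (by finiteness)]

lemma ediam_preimage_prodMk_le {α β : Type*} [PseudoEMetricSpace α] [PseudoEMetricSpace β]
    (x : α) (V : Set (α × β)) : ediam (Prod.mk x ⁻¹' V) ≤ ediam V :=
  ediam_le fun y hy z hz => by
    simpa [Prod.edist_eq] using edist_le_ediam_of_mem (show (x, y) ∈ V from hy) hz

theorem mul_volume_le_tsum_ediam_rpow {X : Type*} [PseudoEMetricSpace X] {d : ℝ} (hd : 0 < d)
    {S : Set X} {c : ℝ≥0∞} (hc : ∀ t : ℕ → Set X, S ⊆ ⋃ n, t n → c ≤ ∑' n, ediam (t n) ^ d)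
    {A : Set ℝ} (hA : MeasurableSet A) {V : ℕ → Set (ℝ × X)} (hV : A ×ˢ S ⊆ ⋃ i, V i) :
    c * volume A ≤ ∑' i, ediam (V i) ^ (d + 1) := by
  set B : ℕ → Set ℝ := fun i => toMeasurable volume (Prod.fst '' V i)
  have hslice : ∀ x ∈ A, c ≤ ∑' i, (B i).indicator (fun _ => ediam (V i) ^ d) x := by
    intro x hx
    refine (hc (fun i => Prod.mk x ⁻¹' V i) fun y hy => ?_).trans
      (ENNReal.tsum_le_tsum fun i => ?_)
    · simpa using hV (mk_mem_prod hx hy)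
    · by_cases hxi : x ∈ Prod.fst '' V i
      · rw [indicator_of_mem (subset_toMeasurable _ _ hxi)]
        exact ENNReal.rpow_le_rpow (ediam_preimage_prodMk_le x (V i)) hd.le
      · have : Prod.mk x ⁻¹' V i = ∅ :=
          eq_empty_of_forall_notMem fun y hy => hxi ⟨(x, y), hy, rfl⟩
        simp [this, ENNReal.zero_rpow_of_pos hd]
  have hB : ∀ i, volume (B i) ≤ ediam (V i) := fun i => by
    rw [measure_toMeasurable]
    simpa using (Real.volume_le_diam _).trans (LipschitzWith.prod_fst.ediam_image_le (V i))
  calc c * volume A = ∫⁻ _ in A, c := (setLIntegral_const A c).symm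
    _ ≤ ∫⁻ x in A, ∑' i, (B i).indicator (fun _ => ediam (V i) ^ d) x :=
        setLIntegral_mono' hA hslice
    _ ≤ ∫⁻ x, ∑' i, (B i).indicator (fun _ => ediam (V i) ^ d) x := setLIntegral_le_lintegral _ _
    _ = ∑' i, ediam (V i) ^ d * volume (B i) := by
        rw [lintegral_tsum fun i =>
          (measurable_const.indicator (measurableSet_toMeasurable _ _)).aemeasurable]
        simp_rw [lintegral_indicator_const (measurableSet_toMeasurable _ _)]
        rfl
    _ ≤ ∑' i, ediam (V i) ^ (d + 1) := ENNReal.tsum_le_tsum fun i => by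
        rw [ENNReal.rpow_add_of_nonneg _ _ hd.le zero_le_one, ENNReal.rpow_one]
        gcongr
        exact hB i

theorem hausdorffMeasure_Icc_prod_ne_zero {X : Type*} [EMetricSpace X] [MeasurableSpace X]
    [BorelSpace X] {a b : ℝ} (hab : a < b) {d : ℝ} (hd : 0 < d) {S : Set X}
    (hS : μH[d] S ≠ 0) : μH[d + 1] (Icc a b ×ˢ S) ≠ 0 := by
  rw [Ne, hausdorffMeasure_eq_zero_iff hd] at hS
  push Not at hS
  obtain ⟨c, hc, hcS⟩ := hS
  rw [Ne, hausdorffMeasure_eq_zero_iff (by linarith)]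
  intro h
  have hvol : 0 < c * volume (Icc a b) := by
    rw [Real.volume_Icc]
    exact ENNReal.mul_pos hc.ne' (by simpa using hab)
  obtain ⟨δ, hδ, hδc⟩ := exists_between hvol
  obtain ⟨V, hV, hVδ⟩ := h δ hδ
  exact (mul_volume_le_tsum_ediam_rpow hd (fun t ht => (hcS t ht).le) measurableSet_Icc hV
    |>.trans hVδ |>.not_gt) hδc

section Dimension

variable {X : Type*} [EMetricSpace X]

theorem dimH_Icc_prod_le {a b : ℝ} (hab : a ≤ b) (S : Set X) :
    dimH (Icc a b ×ˢ S) ≤ 1 + dimH S := by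
  borelize X
  refine ENNReal.le_of_forall_pos_le_add fun ε hε hlt => ?_
  obtain ⟨d, hSd, hdε⟩ := ENNReal.lt_iff_exists_nnreal_btwn.1 <|
    ENNReal.lt_add_right (lt_of_le_of_lt le_add_self hlt).ne (ENNReal.coe_ne_zero.2 hε.ne')
  have hd : (0 : ℝ) < d := ENNReal.coe_pos.1 (zero_le.trans_lt hSd)
  calc dimH (Icc a b ×ˢ S) ≤ ((1 + d : ℝ≥0) : ℝ≥0∞) :=
        dimH_le_of_hausdorffMeasure_ne_top <| by
          rw [NNReal.coe_add, NNReal.coe_one, add_comm,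
            hausdorffMeasure_Icc_prod_eq_zero hab hd (hausdorffMeasure_of_dimH_lt hSd)]
          exact ENNReal.zero_ne_top
    _ ≤ 1 + dimH S + ε := by
        rw [ENNReal.coe_add, ENNReal.coe_one, add_assoc]
        exact add_le_add_right hdε.le 1

theorem le_dimH_Icc_prod {a b : ℝ} (hab : a < b) {S : Set X} (hS : S.Nonempty) :
    1 + dimH S ≤ dimH (Icc a b ×ˢ S) := by
  borelize X
  have h1 : 1 ≤ dimH (Icc a b ×ˢ S) := calc
    1 = dimH (Icc a b) := by simp [Real.dimH_of_nonempty_interior, hab]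
    _ = dimH (Prod.fst '' Icc a b ×ˢ S) := by rw [fst_image_prod _ hS]
    _ ≤ dimH (Icc a b ×ˢ S) := LipschitzWith.prod_fst.dimH_image_le _
  refine ENNReal.le_of_forall_nnreal_lt fun r hr => ?_
  rcases le_or_gt r 1 with hr1 | hr1
  · exact (ENNReal.coe_le_one_iff.2 hr1).trans h1
  have hrS : ((r - 1 : ℝ≥0) : ℝ≥0∞) < dimH S := by
    rw [ENNReal.coe_sub, ENNReal.coe_one]
    exact ENNReal.sub_lt_of_lt_add (by exact_mod_cast hr1.le) (by rwa [add_comm] at hr)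
  have hd : (0 : ℝ) < (r - 1 : ℝ≥0) := NNReal.coe_pos.2 (tsub_pos_of_lt hr1)
  calc (r : ℝ≥0∞) = ((1 + (r - 1) : ℝ≥0) : ℝ≥0∞) := by rw [add_tsub_cancel_of_le hr1.le]
    _ ≤ dimH (Icc a b ×ˢ S) := le_dimH_of_hausdorffMeasure_ne_zero <| by
        rw [NNReal.coe_add, NNReal.coe_one, add_comm]
        exact hausdorffMeasure_Icc_prod_ne_zero hab hd
          (by simp [hausdorffMeasure_of_lt_dimH hrS])

theorem dimH_univ_prod {S : Set X} (hS : S.Nonempty) :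
    dimH ((univ : Set ℝ) ×ˢ S) = 1 + dimH S := by
  refine le_antisymm ?_ ((le_dimH_Icc_prod zero_lt_one hS).trans
    (dimH_mono (prod_mono_left (subset_univ _))))
  have hcover : (univ : Set ℝ) = ⋃ n : ℕ, Icc (-n : ℝ) n :=
    (eq_univ_of_forall fun x => mem_iUnion.2
      ⟨⌈|x|⌉₊, abs_le.1 (Nat.le_ceil |x|)⟩).symm
  rw [hcover, iUnion_prod_const, dimH_iUnion]
  exact iSup_le fun n => dimH_Icc_prod_le (neg_le_self n.cast_nonneg) S

end Dimension

section LocalDiffeomorphism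

variable {E F : Type*} [NormedAddCommGroup E] [NormedSpace ℝ E] [NormedAddCommGroup F]
  [NormedSpace ℝ F]

lemma ContDiffAt.exists_lipschitzOnWith_mem_nhdsWithin {f : E → F} {x : E}
    (hf : ContDiffAt ℝ 1 f x) (s : Set E) : ∃ C, ∃ t ∈ 𝓝[s] x, LipschitzOnWith C f t :=
  let ⟨C, t, ht, hC⟩ := hf.exists_lipschitzOnWith
  ⟨C, t, mem_nhdsWithin_of_mem_nhds ht, hC⟩

theorem dimH_image_eq_of_leftInvOn [SecondCountableTopology E] [SecondCountableTopology F]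
    {f : E → F} {g : F → E} {s : Set E} (hf : ∀ x ∈ s, ContDiffAt ℝ 1 f x)
    (hg : ∀ x ∈ s, ContDiffAt ℝ 1 g (f x)) (hgf : LeftInvOn g f s) :
    dimH (f '' s) = dimH s := by
  refine le_antisymm (dimH_image_le_of_locally_lipschitzOn fun x hx =>
    (hf x hx).exists_lipschitzOnWith_mem_nhdsWithin s) ?_
  calc dimH s = dimH (g '' (f '' s)) := by rw [hgf.image_image]
    _ ≤ dimH (f '' s) := dimH_image_le_of_locally_lipschitzOn <| by
        rintro _ ⟨x, hx, rfl⟩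
        exact (hg x hx).exists_lipschitzOnWith_mem_nhdsWithin _

end LocalDiffeomorphism

section SL2

open Matrix.SpecialLinearGroup

def entries (x : SL2) : Fin 2 → Fin 2 → ℝ := Matrix.of.symm (x : Matrix (Fin 2) (Fin 2) ℝ)

lemma isometry_entries : Isometry entries := Isometry.of_dist_eq fun _ _ => rfl

lemma of_entries_mul_mul_inv (x g : SL2) :
    Matrix.of (entries (x * g)) * ((g⁻¹ : SL2) : Matrix (Fin 2) (Fin 2) ℝ) = x := by
  rw [entries, Equiv.apply_symm_apply, ← coe_mul, mul_inv_cancel_right]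

lemma coe_nMat (s : ℝ) : ((nMat s : SL2) : Matrix (Fin 2) (Fin 2) ℝ) = !![1, 0; s, 1] := rfl

lemma coe_aMat (t : ℝ) :
    ((aMat t : SL2) : Matrix (Fin 2) (Fin 2) ℝ) =
      !![Real.exp (t / 2), 0; 0, Real.exp (-(t / 2))] := rfl

lemma coe_nMat_mul_aMat (s t : ℝ) :
    ((nMat s * aMat t : SL2) : Matrix (Fin 2) (Fin 2) ℝ) =
      !![Real.exp (t / 2), 0; s * Real.exp (t / 2), Real.exp (-(t / 2))] := by
  simp [coe_nMat, coe_aMat]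

def nACoords (h : Matrix (Fin 2) (Fin 2) ℝ) (M : Fin 2 → Fin 2 → ℝ) : ℝ × ℝ :=
  ((Matrix.of M * h) 1 0 / (Matrix.of M * h) 0 0, 2 * Real.log ((Matrix.of M * h) 0 0))

lemma nACoords_entries (g : SL2) (p : ℝ × ℝ) :
    nACoords ((g⁻¹ : SL2) : Matrix (Fin 2) (Fin 2) ℝ) (entries (nMat p.1 * aMat p.2 * g)) = p := by
  simp only [nACoords, of_entries_mul_mul_inv, coe_nMat_mul_aMat]
  simp [Real.exp_ne_zero, mul_div_cancel₀]

lemma contDiff_entries_nMat_mul_aMat_mul (g : SL2) :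
    ContDiff ℝ 1 fun p : ℝ × ℝ => entries (nMat p.1 * aMat p.2 * g) := by
  refine contDiff_pi.2 fun i => contDiff_pi.2 fun j => ?_
  simp only [entries, coe_mul, coe_nMat, coe_aMat, Matrix.mul_fin_two]
  fin_cases i <;> simp [Matrix.vecMul, dotProduct, Fin.sum_univ_two] <;> fun_prop

lemma contDiffAt_nACoords {h : Matrix (Fin 2) (Fin 2) ℝ} {M : Fin 2 → Fin 2 → ℝ}
    (hM : (Matrix.of M * h) 0 0 ≠ 0) : ContDiffAt ℝ 1 (nACoords h) M := by
  have hentry : ∀ i j, ContDiff ℝ 1 fun M : Fin 2 → Fin 2 → ℝ => (Matrix.of M * h) i j := by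
    intro i j
    simp only [Matrix.mul_apply, Fin.sum_univ_two, Matrix.of_apply]
    fun_prop
  exact ((hentry 1 0).contDiffAt.div (hentry 0 0).contDiffAt hM).prodMk
    (contDiffAt_const.mul ((hentry 0 0).contDiffAt.log hM))

theorem dimH_image_nMat_mul_aMat_mul (g : SL2) (s : Set (ℝ × ℝ)) :
    dimH ((fun p : ℝ × ℝ => nMat p.1 * aMat p.2 * g) '' s) = dimH s := by
  rw [← isometry_entries.dimH_image, image_image]
  refine dimH_image_eq_of_leftInvOn (fun p _ => (contDiff_entries_nMat_mul_aMat_mul g).contDiffAt)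
    (fun p _ => contDiffAt_nACoords ?_) (fun p _ => nACoords_entries g p)
  simp only [of_entries_mul_mul_inv, coe_nMat_mul_aMat]
  simp [Real.exp_ne_zero]

end SL2

/-- The Hausdorff dimension of the `N`-saturated set over an `A`-slice `S` based at `g`
equals `1 + dimH S`. -/
theorem dimH_N_saturated_A_slice (S : Set ℝ) (hS : S.Nonempty) (g : SL2) :
    dimH {x : SL2 | ∃ s : ℝ, ∃ t ∈ S, x = nMat s * aMat t * g} = 1 + dimH S := by
  have hset : {x : SL2 | ∃ s : ℝ, ∃ t ∈ S, x = nMat s * aMat t * g} =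
      (fun p : ℝ × ℝ => nMat p.1 * aMat p.2 * g) '' (univ ×ˢ S) := by
    ext x
    simp [eq_comm]
  rw [hset, dimH_image_nMat_mul_aMat_mul, dimH_univ_prod hS]
end
end
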